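/- Define the relation ⊴_l on OF_n by a ⊴_l b iff a = be for some e ∈ E = {f_{Z,Z} : Z ⊆ [n-1]}. Then ⊴_l is contained in the partial order ⪯ defined by f_{Z,W} ⪯ f_{X,Y} iff W ⊊ Y, or (W = Y and Z ≤ X componentwise). In particular, f_{X,Y}·f_{Z,Z} is of the form f_{Z',Y'} with Y' ⊆ Y, and if Y' = Y then Z' ≤ X componentwise. -/

import Mathlib

/-! A monotone self-map `F` of `Fin (n + 1)` fixing the top is `f_{J,V}`, where `J` is the set
of points at which `F` jumps and `V` the set of non-top values of `F`: the number of jumps below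
`x` equals the number of values below `F x`. For `F = f_{X,Y} ∘ f_{Z,Z}` the values lie in `Y`.
If they exhaust `Y`, then `f_{X,Y} ≤ f_{X,Y} ∘ f_{Z,Z} = f_{J,Y}` pointwise because
`f_{Z,Z} ≥ id`. Since `f_{S,Y} x` is a strictly increasing function of `#{t ∈ S | t < x}`, this
says that `J` has at least as many elements as `X` below every point, i.e. `J ≤ X`
componentwise. -/

/-- The order-preserving map `f_{X,Y} : [n+1] → [n+1]` (with top element
`Fin.last n` playing the role of `n+1`, and `X, Y ⊆ [n]` via `Fin.castSucc`)
determined by equal-size subsets `X, Y`: it sends the interval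
`(x_{i-1}, x_i]` to `y_i` and everything above `x_l` to the top. -/
def fXY (n : ℕ) (X Y : Finset (Fin n)) (_h : X.card = Y.card) :
    Fin (n + 1) → Fin (n + 1) := fun x =>
  if hk : (X.filter fun t => t.castSucc < x).card < Y.card then
    (Y.orderEmbOfFin rfl ⟨_, hk⟩).castSucc
  else Fin.last n

theorem fXY_monotone (n : ℕ) (X Y : Finset (Fin n)) (h : X.card = Y.card) :
    Monotone (fXY n X Y h) := by
  intro a b hab
  unfold fXY
  have hle : (X.filter fun t => t.castSucc < a).card ≤
      (X.filter fun t => t.castSucc < b).card :=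
    Finset.card_le_card (fun t ht => by
      simp only [Finset.mem_filter] at ht ⊢
      exact ⟨ht.1, lt_of_lt_of_le ht.2 hab⟩)
  by_cases ha : (X.filter fun t => t.castSucc < a).card < Y.card
  · by_cases hb : (X.filter fun t => t.castSucc < b).card < Y.card
    · rw [dif_pos ha, dif_pos hb]
      exact Fin.castSucc_le_castSucc_iff.mpr
        ((Y.orderEmbOfFin rfl).monotone (by exact hle))
    · rw [dif_pos ha, dif_neg hb]; exact Fin.le_last _
  · have hb : ¬(X.filter fun t => t.castSucc < b).card < Y.card := by omega
    rw [dif_neg ha, dif_neg hb]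

theorem fXY_last (n : ℕ) (X Y : Finset (Fin n)) (h : X.card = Y.card) :
    fXY n X Y h (Fin.last n) = Fin.last n := by
  unfold fXY
  rw [Finset.filter_true_of_mem (fun t _ => Fin.castSucc_lt_last t), h,
    dif_neg (lt_irrefl _)]

/-- The monoid `OF_{n+1}` of order-preserving self-maps of `[n+1]` fixing the
top element, as a submonoid of `Function.End (Fin (n+1))`. -/
def OFmon (n : ℕ) : Submonoid (Function.End (Fin (n + 1))) where
  carrier := {f | Monotone f ∧ f (Fin.last n) = Fin.last n}
  mul_mem' := by
    rintro f g ⟨hf1, hf2⟩ ⟨hg1, hg2⟩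
    refine ⟨hf1.comp hg1, ?_⟩
    show f (g (Fin.last n)) = Fin.last n
    rw [hg2, hf2]
  one_mem' := ⟨monotone_id, rfl⟩

/-- `f_{X,Y}` as an element of the monoid `OF_{n+1}`. -/
def FXY (n : ℕ) (X Y : Finset (Fin n)) (h : X.card = Y.card) : OFmon n :=
  ⟨fXY n X Y h, fXY_monotone n X Y h, fXY_last n X Y h⟩

/-- Green's `R`-equivalence on a monoid. -/
def RRel {M : Type*} [Monoid M] (a b : M) : Prop :=
  (∃ u, a * u = b) ∧ ∃ u, b * u = a

/-- Green's `L`-equivalence on a monoid. -/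
def LRel {M : Type*} [Monoid M] (a b : M) : Prop :=
  (∃ u, u * a = b) ∧ ∃ u, u * b = a

/-- Green's `J`-equivalence on a monoid. -/
def JRel {M : Type*} [Monoid M] (a b : M) : Prop :=
  (∃ u v, u * a * v = b) ∧ ∃ u v, u * b * v = a

open Finset

section Rank

variable {α : Type*} [LinearOrder α]

theorem filter_eq_map_orderEmbOfFin (S : Finset α) {k : ℕ} (h : #S = k) (p : α → Prop)
    [DecidablePred p] :
    S.filter p = (univ.filter fun i => p (S.orderEmbOfFin h i)).map
      (S.orderEmbOfFin h).toEmbedding := by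
  conv_lhs => rw [← map_orderEmbOfFin_univ S h]
  rw [filter_map]
  rfl

theorem card_filter_lt_orderEmbOfFin (S : Finset α) {k : ℕ} (h : #S = k) (i : Fin k) :
    #(S.filter (· < S.orderEmbOfFin h i)) = i := by
  rw [filter_eq_map_orderEmbOfFin S h, card_map, ← Fin.card_Iio i]
  simp only [OrderEmbedding.lt_iff_lt]
  congr 1
  ext; simp

theorem card_filter_le_orderEmbOfFin (S : Finset α) {k : ℕ} (h : #S = k) (i : Fin k) :
    #(S.filter (· ≤ S.orderEmbOfFin h i)) = i + 1 := by
  rw [filter_eq_map_orderEmbOfFin S h, card_map, ← Fin.card_Iic i]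
  simp only [OrderEmbedding.le_iff_le]
  congr 1
  ext; simp

theorem orderEmbOfFin_card_filter_lt (S : Finset α) {y : α} (hy : y ∈ S)
    (hk : #(S.filter (· < y)) < #S) : S.orderEmbOfFin rfl ⟨_, hk⟩ = y := by
  obtain ⟨i, rfl⟩ : y ∈ Set.range (S.orderEmbOfFin rfl) := by rwa [range_orderEmbOfFin]
  rw [show (⟨_, hk⟩ : Fin #S) = i from Fin.ext (card_filter_lt_orderEmbOfFin S rfl i)]

theorem orderEmbOfFin_le_of_card_filter_le {X Z : Finset α}
    (hXZ : ∀ a, #(X.filter (· ≤ a)) ≤ #(Z.filter (· ≤ a))) (hc : #Z = #X) (i : Fin #Z) :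
    Z.orderEmbOfFin rfl i ≤ X.orderEmbOfFin hc.symm i := by
  by_contra! hlt
  have hX := hXZ (X.orderEmbOfFin hc.symm i)
  have hZ : #(Z.filter (· ≤ X.orderEmbOfFin hc.symm i)) ≤
      #(Z.filter (· < Z.orderEmbOfFin rfl i)) :=
    card_le_card (monotone_filter_right _ fun _ _ ht => ht.trans_lt hlt)
  rw [card_filter_le_orderEmbOfFin] at hX
  rw [card_filter_lt_orderEmbOfFin] at hZ
  omega

end Rank

section fXY

variable {n : ℕ}

theorem fXY_apply_of_lt (X Y : Finset (Fin n)) (h : #X = #Y) {x : Fin (n + 1)}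
    (hk : #(X.filter (·.castSucc < x)) < #Y) :
    fXY n X Y h x = (Y.orderEmbOfFin rfl ⟨_, hk⟩).castSucc :=
  dif_pos hk

theorem fXY_apply_of_not_lt (X Y : Finset (Fin n)) (h : #X = #Y) {x : Fin (n + 1)}
    (hk : ¬#(X.filter (·.castSucc < x)) < #Y) : fXY n X Y h x = Fin.last n :=
  dif_neg hk

theorem fXY_congr_of_card_filter_eq {X X' Y : Finset (Fin n)} (h : #X = #Y) (h' : #X' = #Y)
    {x x' : Fin (n + 1)}
    (hc : #(X.filter (·.castSucc < x)) = #(X'.filter (·.castSucc < x'))) :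
    fXY n X Y h x = fXY n X' Y h' x' := by
  simp only [fXY, hc]

theorem fXY_lt_fXY_of_card_filter_lt {X X' Y : Finset (Fin n)} (h : #X = #Y) (h' : #X' = #Y)
    {x x' : Fin (n + 1)}
    (hc : #(X'.filter (·.castSucc < x')) < #(X.filter (·.castSucc < x))) :
    fXY n X' Y h' x' < fXY n X Y h x := by
  have hk' : #(X'.filter (·.castSucc < x')) < #Y := hc.trans_le (h ▸ card_filter_le _ _)
  rw [fXY_apply_of_lt X' Y h' hk']
  by_cases hk : #(X.filter (·.castSucc < x)) < #Y
  · rw [fXY_apply_of_lt X Y h hk, Fin.castSucc_lt_castSucc_iff]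
    exact (Y.orderEmbOfFin rfl).lt_iff_lt.2 hc
  · rw [fXY_apply_of_not_lt X Y h hk]
    exact Fin.castSucc_lt_last _

theorem fXY_self_apply_castSucc {S : Finset (Fin n)} {y : Fin n} (hy : y ∈ S) :
    fXY n S S rfl y.castSucc = y.castSucc := by
  have hk : #(S.filter (·.castSucc < y.castSucc)) < #S :=
    card_lt_card (filter_ssubset.2 ⟨y, hy, lt_irrefl _⟩)
  rw [fXY_apply_of_lt S S rfl hk]
  simp only [Fin.castSucc_lt_castSucc_iff] at hk ⊢
  rw [orderEmbOfFin_card_filter_lt S hy hk]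

theorem le_fXY_self (Z : Finset (Fin n)) (x : Fin (n + 1)) : x ≤ fXY n Z Z rfl x := by
  by_cases hk : #(Z.filter (·.castSucc < x)) < #Z
  · rw [fXY_apply_of_lt Z Z rfl hk]
    by_contra! hlt
    have hcount : #(Z.filter (· ≤ Z.orderEmbOfFin rfl ⟨_, hk⟩)) ≤
        #(Z.filter (·.castSucc < x)) :=
      card_le_card (monotone_filter_right _ fun _ _ ht =>
        (Fin.castSucc_le_castSucc_iff.2 ht).trans_lt hlt)
    rw [card_filter_le_orderEmbOfFin] at hcount
    exact Nat.not_succ_le_self _ hcount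
  · rw [fXY_apply_of_not_lt Z Z rfl hk]
    exact Fin.le_last x

theorem orderEmbOfFin_le_of_fXY_le {X Z Y : Finset (Fin n)} (h : #X = #Y) (h' : #Z = #Y)
    (hle : ∀ x, fXY n X Y h x ≤ fXY n Z Y h' x) (hc : #Z = #X) (i : Fin #Z) :
    Z.orderEmbOfFin rfl i ≤ X.orderEmbOfFin hc.symm i := by
  refine orderEmbOfFin_le_of_card_filter_le (fun a => ?_) hc i
  have hle_a := hle a.succ
  contrapose! hle_a
  apply fXY_lt_fXY_of_card_filter_lt
  simpa only [Fin.castSucc_lt_succ_iff] using hle_a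

end fXY

section Decomposition

variable {n : ℕ}

def jumps (F : Fin (n + 1) → Fin (n + 1)) : Finset (Fin n) :=
  univ.filter fun z => F z.castSucc ≠ F z.succ

def imageBelowLast (F : Fin (n + 1) → Fin (n + 1)) : Finset (Fin n) :=
  univ.filter fun y => y.castSucc ∈ Set.range F

theorem mem_imageBelowLast {F : Fin (n + 1) → Fin (n + 1)} {y : Fin n} :
    y ∈ imageBelowLast F ↔ y.castSucc ∈ Set.range F := by
  simp [imageBelowLast]

theorem filter_imageBelowLast_lt_succ {F : Fin (n + 1) → Fin (n + 1)} (hF : Monotone F)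
    {i : Fin n} (hlt : F i.castSucc < F i.succ) {v : Fin n} (hv : v.castSucc = F i.castSucc) :
    (imageBelowLast F).filter (·.castSucc < F i.succ) =
      insert v ((imageBelowLast F).filter (·.castSucc < F i.castSucc)) := by
  ext y
  simp only [mem_insert, mem_filter, mem_imageBelowLast]
  constructor
  · rintro ⟨⟨w, hw⟩, hy⟩
    rcases le_or_gt w i.castSucc with hwi | hwi
    · rcases (hw ▸ hF hwi).eq_or_lt with hyv | hyv
      · exact Or.inl (Fin.castSucc_injective _ (hyv.trans hv.symm))
      · exact Or.inr ⟨⟨w, hw⟩, hyv⟩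
    · exact absurd (hw ▸ hF (Fin.castSucc_lt_iff_succ_le.1 hwi)) hy.not_ge
  · rintro (rfl | ⟨hy, hlt'⟩)
    · exact ⟨⟨_, hv.symm⟩, hv ▸ hlt⟩
    · exact ⟨hy, hlt'.trans hlt⟩

theorem card_filter_jumps {F : Fin (n + 1) → Fin (n + 1)} (hF : Monotone F) (x : Fin (n + 1)) :
    #((jumps F).filter (·.castSucc < x)) = #((imageBelowLast F).filter (·.castSucc < F x)) := by
  induction x using Fin.induction with
  | zero =>
    rw [filter_false_of_mem fun _ _ => Fin.not_lt_zero _,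
      filter_false_of_mem fun y hy => ?_]
    obtain ⟨w, hw⟩ := mem_imageBelowLast.1 hy
    exact hw ▸ (hF (Fin.zero_le w)).not_gt
  | succ i ih =>
    have hjumps : ∀ t : Fin n, t.castSucc < i.succ ↔ t = i ∨ t.castSucc < i.castSucc := by
      intro t
      rw [Fin.castSucc_lt_succ_iff, Fin.castSucc_lt_castSucc_iff, le_iff_eq_or_lt]
    rcases (hF (Fin.castSucc_le_succ i)).eq_or_lt with heq | hlt
    · rw [← heq, ← ih]
      congr 1
      refine filter_congr fun t ht => ?_
      rw [hjumps, or_iff_right]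
      rintro rfl
      exact (mem_filter.1 ht).2 heq
    · obtain ⟨v, hv⟩ := Fin.exists_castSucc_eq.2 (Fin.ne_last_of_lt hlt)
      have hL : (jumps F).filter (·.castSucc < i.succ) =
          insert i ((jumps F).filter (·.castSucc < i.castSucc)) := by
        ext t
        simp only [mem_insert, mem_filter, hjumps]
        constructor
        · rintro ⟨ht, rfl | hlt'⟩
          exacts [Or.inl rfl, Or.inr ⟨ht, hlt'⟩]
        · rintro (rfl | ⟨ht, hlt'⟩)
          · exact ⟨by simpa [jumps] using hlt.ne, Or.inl rfl⟩
          · exact ⟨ht, Or.inr hlt'⟩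
      rw [hL, filter_imageBelowLast_lt_succ hF hlt hv, card_insert_of_notMem (by simp),
        card_insert_of_notMem (by simp [hv]), ih]

theorem card_jumps {F : Fin (n + 1) → Fin (n + 1)} (hF : Monotone F)
    (hlast : F (Fin.last n) = Fin.last n) : #(jumps F) = #(imageBelowLast F) := by
  simpa [hlast, Fin.castSucc_lt_last] using card_filter_jumps hF (Fin.last n)

theorem eq_fXY_jumps {F : Fin (n + 1) → Fin (n + 1)} (hF : Monotone F)
    (hlast : F (Fin.last n) = Fin.last n) :
    F = fXY n (jumps F) (imageBelowLast F) (card_jumps hF hlast) := by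
  funext x
  rw [fXY_congr_of_card_filter_eq _ rfl (card_filter_jumps hF x)]
  by_cases hx : F x = Fin.last n
  · rw [hx, fXY_last]
  · obtain ⟨y, hy⟩ := Fin.exists_castSucc_eq.2 hx
    rw [← hy, fXY_self_apply_castSucc (mem_imageBelowLast.2 ⟨x, hy.symm⟩)]

theorem imageBelowLast_comp_subset (f g : Fin (n + 1) → Fin (n + 1)) :
    imageBelowLast (f ∘ g) ⊆ imageBelowLast f := fun _ hy =>
  mem_imageBelowLast.2 (Set.range_comp_subset_range g f (mem_imageBelowLast.1 hy))

theorem imageBelowLast_fXY_subset (X Y : Finset (Fin n)) (h : #X = #Y) :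
    imageBelowLast (fXY n X Y h) ⊆ Y := by
  intro y hy
  obtain ⟨x, hx⟩ := mem_imageBelowLast.1 hy
  by_cases hk : #(X.filter (·.castSucc < x)) < #Y
  · rw [fXY_apply_of_lt X Y h hk] at hx
    exact Fin.castSucc_injective _ hx ▸ orderEmbOfFin_mem Y rfl _
  · rw [fXY_apply_of_not_lt X Y h hk] at hx
    exact absurd hx.symm (Fin.castSucc_lt_last y).ne

end Decomposition

/-- The relation `⊴_l` (`a ⊴_l b` iff `a = b·f_{Z,Z}` for some `Z`) is contained
in the partial order `⪯` given by `f_{Z',Y'} ⪯ f_{X,Y}` iff `Y' ⊊ Y` or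
(`Y' = Y` and `Z' ≤ X` componentwise): concretely, `f_{X,Y} ∘ f_{Z,Z}` equals
some `f_{Z',Y'}` with `Y' ⊆ Y`, and if `Y' = Y` then `Z' ≤ X` componentwise. -/
theorem statement18 (n : ℕ) :
    ∀ (X Y : Finset (Fin n)) (h : X.card = Y.card) (Z : Finset (Fin n)),
      ∃ (Z' Y' : Finset (Fin n)) (h' : Z'.card = Y'.card),
        fXY n X Y h ∘ fXY n Z Z rfl = fXY n Z' Y' h' ∧
        (Y' ⊂ Y ∨ ∃ hc : Z'.card = X.card, Y' = Y ∧
          ∀ i : Fin Z'.card, Z'.orderEmbOfFin rfl i ≤ X.orderEmbOfFin hc.symm i) := by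
  intro X Y h Z
  set F := fXY n X Y h ∘ fXY n Z Z rfl
  have hF : Monotone F := (fXY_monotone n X Y h).comp (fXY_monotone n Z Z rfl)
  have hlast : F (Fin.last n) = Fin.last n := by simp only [F, Function.comp_apply, fXY_last]
  refine ⟨jumps F, imageBelowLast F, card_jumps hF hlast, eq_fXY_jumps hF hlast, ?_⟩
  have hsub : imageBelowLast F ⊆ Y :=
    (imageBelowLast_comp_subset _ _).trans (imageBelowLast_fXY_subset X Y h)
  obtain hlt | heq := hsub.ssubset_or_eq
  · exact Or.inl hlt
  have hc : #(jumps F) = #X := by rw [card_jumps hF hlast, heq, h]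
  have hle : ∀ x, fXY n X Y h x ≤ fXY n (jumps F) Y (hc.trans h) x := fun x =>
    calc fXY n X Y h x ≤ F x := fXY_monotone n X Y h (le_fXY_self Z x)
      _ = _ := congrFun (eq_fXY_jumps hF hlast) x
      _ = _ := by simp only [heq]
  exact Or.inr ⟨hc, heq, orderEmbOfFin_le_of_fXY_le h _ hle hc⟩
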